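/- arXiv:1312.3915 — 2 statements merged into one kernel-verified Lean document; each statement's English description precedes it below -/
import Mathlib

section
/- For every Borel set Ω ⊂ X one has H₀(Ω) = H₀({w_Ω > 0}); consequently λ₁(Ω) = λ₁({w_Ω > 0}) and E(Ω) = E({w_Ω > 0}). -/
/-!
If `w` minimizes `F^{1,1}` on `H₀(Ω)` and `0 ≤ u ∈ H₀(Ω)`, then `w ⊔ εu` is an admissible
competitor, and comparing energies gives `∫ (w ⊔ εu - w) ≤ ε² ‖u‖²_H / 2`. On `{w ≤ 0}` the
integrand is at least `εu`, so `∫_{w ≤ 0} u ≤ ε ‖u‖²_H / 2` for every `ε > 0`: every nonnegative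
element of `H₀(Ω)` vanishes a.e. on `{w ≤ 0}`. Splitting an arbitrary `u` into `u⁺` and `u⁻`
gives `H₀(Ω) ⊆ H₀({w > 0})`; the other inclusion holds because `w` vanishes outside `Ω`.
-/

open MeasureTheory Filter
open scoped ENNReal

namespace AbsSob

variable {X : Type*} [MeasurableSpace X]

/-- Abstract Sobolev setting: a Riesz subspace `H` of `L²(X,m)` with the Stone
property (H1)-(H2), together with a gradient-like map `D` satisfying (D1)-(D4). -/
structure Setting (X : Type*) [MeasurableSpace X] (m : Measure X) where
  H : Set (X → ℝ)
  D : (X → ℝ) → X → ℝ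
  zero_mem : (fun _ => (0 : ℝ)) ∈ H
  add_mem : ∀ ⦃u v : X → ℝ⦄, u ∈ H → v ∈ H → u + v ∈ H
  smul_mem : ∀ (c : ℝ) ⦃u : X → ℝ⦄, u ∈ H → c • u ∈ H
  sup_mem : ∀ ⦃u v : X → ℝ⦄, u ∈ H → v ∈ H → u ⊔ v ∈ H
  inf_mem : ∀ ⦃u v : X → ℝ⦄, u ∈ H → v ∈ H → u ⊓ v ∈ H
  stone : ∀ ⦃u : X → ℝ⦄, u ∈ H → u ⊓ 1 ∈ H
  memL2 : ∀ ⦃u : X → ℝ⦄, u ∈ H → MemLp u 2 m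
  gradL2 : ∀ ⦃u : X → ℝ⦄, u ∈ H → MemLp (D u) 2 m
  D1 : ∀ ⦃u : X → ℝ⦄, u ∈ H → ∀ᵐ x ∂m, 0 ≤ D u x
  D2 : ∀ ⦃u v : X → ℝ⦄, u ∈ H → v ∈ H → ∀ᵐ x ∂m, D (u + v) x ≤ D u x + D v x
  D3 : ∀ (c : ℝ) ⦃u : X → ℝ⦄, u ∈ H → ∀ᵐ x ∂m, D (c • u) x = |c| * D u x
  D4 : ∀ ⦃u v : X → ℝ⦄, u ∈ H → v ∈ H → ∀ᵐ x ∂m,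
      D (u ⊔ v) x = if v x < u x then D u x else D v x

variable {m : Measure X}

/-- Square of the `H`-norm: `‖u‖_H² = ‖u‖²_{L²} + ‖Du‖²_{L²}`. -/
noncomputable def normHsq (S : Setting X m) (u : X → ℝ) : ℝ :=
  ∫ x, (u x) ^ 2 ∂m + ∫ x, (S.D u x) ^ 2 ∂m

/-- Sobolev functions vanishing (m-a.e.) outside `Ω`. -/
def H0 (S : Setting X m) (Ω : Set X) : Set (X → ℝ) :=
  {u | u ∈ S.H ∧ ∀ᵐ x ∂m, x ∉ Ω → u x = 0}

/-- The functional `F^{a,f}(u) = ½∫|Du|² + (a/2)∫u² − ∫ f u`. -/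
noncomputable def F (S : Setting X m) (a : ℝ) (f : X → ℝ) (u : X → ℝ) : ℝ :=
  (1 / 2) * ∫ x, (S.D u x) ^ 2 ∂m + (a / 2) * ∫ x, (u x) ^ 2 ∂m - ∫ x, f x * u x ∂m

/-- `w` is a minimizer of `F^{a,f}` over `H₀(Ω)`. -/
def IsMinimizer (S : Setting X m) (Ω : Set X) (a : ℝ) (f : X → ℝ) (w : X → ℝ) : Prop :=
  w ∈ H0 S Ω ∧ ∀ u ∈ H0 S Ω, F S a f w ≤ F S a f u

/-- (ℋ2): the inclusion `H ↪ L²` is compact. -/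
def CompactEmbedding (S : Setting X m) : Prop :=
  ∀ u : ℕ → X → ℝ, (∀ n, u n ∈ S.H) → (∃ C : ℝ, ∀ n, normHsq S (u n) ≤ C) →
    ∃ (φ : ℕ → ℕ) (v : X → ℝ), StrictMono φ ∧ v ∈ S.H ∧
      Tendsto (fun k => ∫ x, (u (φ k) x - v x) ^ 2 ∂m) atTop (nhds 0)

/-- (ℋ3): lower semicontinuity of the gradient energy along `L²`-convergent
`H`-bounded sequences, whose limit moreover belongs to `H`. -/
def GradLSC (S : Setting X m) : Prop :=
  ∀ (u : ℕ → X → ℝ) (v : X → ℝ), (∀ n, u n ∈ S.H) →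
    (∃ C : ℝ, ∀ n, normHsq S (u n) ≤ C) →
    Tendsto (fun n => ∫ x, (u n x - v x) ^ 2 ∂m) atTop (nhds 0) →
    v ∈ S.H ∧ ∫ x, (S.D v x) ^ 2 ∂m ≤ liminf (fun n => ∫ x, (S.D (u n) x) ^ 2 ∂m) atTop

/-- Energy sets: Borel sets coinciding up to an `m`-null set with `{w_Ω > 0}`. -/
def IsEnergySet (S : Setting X m) (Ω : Set X) : Prop :=
  MeasurableSet Ω ∧ ∃ w, IsMinimizer S Ω 1 (fun _ => 1) w ∧ m (Ω \ {x | 0 < w x}) = 0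


/-- First eigenvalue `λ₁(Ω)` (normalized Rayleigh quotient form). -/
noncomputable def lambda1 (S : Setting X m) (Ω : Set X) : ℝ :=
  sInf {r : ℝ | ∃ u ∈ H0 S Ω, (∫ x, (u x) ^ 2 ∂m) = 1 ∧ r = ∫ x, (S.D u x) ^ 2 ∂m}

/-- Dirichlet energy `E(Ω)`. -/
noncomputable def En (S : Setting X m) (Ω : Set X) : ℝ :=
  sInf {r : ℝ | ∃ u ∈ H0 S Ω, r = F S 1 (fun _ => 1) u}

section H0

variable (S : Setting X m) {Ω : Set X}

lemma H0_mono_ae {Ω' : Set X} (h : ∀ᵐ x ∂m, x ∈ Ω' → x ∈ Ω) : H0 S Ω' ⊆ H0 S Ω :=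
  fun _ hu => ⟨hu.1, by filter_upwards [h, hu.2] with x hΩ hu hx using hu (mt hΩ hx)⟩

lemma zero_mem_H0 (Ω : Set X) : (0 : X → ℝ) ∈ H0 S Ω :=
  ⟨S.zero_mem, ae_of_all _ fun _ _ => rfl⟩

variable {S} {u v : X → ℝ}

lemma sup_mem_H0 (hu : u ∈ H0 S Ω) (hv : v ∈ H0 S Ω) : u ⊔ v ∈ H0 S Ω :=
  ⟨S.sup_mem hu.1 hv.1, by
    filter_upwards [hu.2, hv.2] with x hu hv hx
    simp [hu hx, hv hx]⟩

lemma smul_mem_H0 (c : ℝ) (hu : u ∈ H0 S Ω) : c • u ∈ H0 S Ω :=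
  ⟨S.smul_mem c hu.1, by
    filter_upwards [hu.2] with x hu hx
    simp [hu hx]⟩

end H0

lemma integral_sq_sup_smul_le {w u : X → ℝ} (hw : MemLp w 2 m) (hu : MemLp u 2 m) (c : ℝ) :
    ∫ x, (w ⊔ c • u) x ^ 2 ∂m ≤ ∫ x, w x ^ 2 ∂m + c ^ 2 * ∫ x, u x ^ 2 ∂m := by
  rw [← integral_const_mul, ← integral_add hw.integrable_sq (hu.integrable_sq.const_mul _)]
  refine integral_mono (hw.sup (hu.const_smul c)).integrable_sq
    (hw.integrable_sq.add (hu.integrable_sq.const_mul _)) fun x => ?_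
  simp only [Pi.sup_apply, Pi.smul_apply, smul_eq_mul]
  rcases max_choice (w x) (c * u x) with h | h <;> rw [h] <;>
    nlinarith [sq_nonneg (w x), sq_nonneg (c * u x)]

lemma integral_sq_D_sup_smul_le (S : Setting X m) {w u : X → ℝ} (hw : w ∈ S.H) (hu : u ∈ S.H)
    (c : ℝ) :
    ∫ x, S.D (w ⊔ c • u) x ^ 2 ∂m ≤ ∫ x, S.D w x ^ 2 ∂m + c ^ 2 * ∫ x, S.D u x ^ 2 ∂m := by
  have hDw := (S.gradL2 hw).integrable_sq
  have hDu := (S.gradL2 hu).integrable_sq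
  rw [← integral_const_mul, ← integral_add hDw (hDu.const_mul _)]
  refine integral_mono_ae (S.gradL2 (S.sup_mem hw (S.smul_mem c hu))).integrable_sq
    (hDw.add (hDu.const_mul _)) ?_
  filter_upwards [S.D4 hw (S.smul_mem c hu), S.D3 c hu] with x hsup hsmul
  rw [hsup]
  split_ifs
  · exact le_add_of_nonneg_right (by positivity)
  · rw [hsmul, mul_pow, sq_abs]
    exact le_add_of_nonneg_left (sq_nonneg _)

variable [IsFiniteMeasure m] (S : Setting X m) {Ω : Set X} {w u : X → ℝ}

lemma integral_sup_smul_sub_le_of_isMinimizer (hw : IsMinimizer S Ω 1 (fun _ => 1) w)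
    (hu : u ∈ H0 S Ω) (c : ℝ) :
    ∫ x, ((w ⊔ c • u) x - w x) ∂m ≤ c ^ 2 * normHsq S u / 2 := by
  have hv := sup_mem_H0 hw.1 (smul_mem_H0 c hu)
  have hmin := hw.2 _ hv
  simp only [F, one_mul] at hmin
  rw [integral_sub ((S.memL2 hv.1).integrable one_le_two) ((S.memL2 hw.1.1).integrable one_le_two)]
  have hsq := integral_sq_sup_smul_le (S.memL2 hw.1.1) (S.memL2 hu.1) c
  have hDsq := integral_sq_D_sup_smul_le S hw.1.1 hu.1 c
  rw [normHsq]
  linarith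

open Topology in
lemma ae_eq_zero_of_nonpos_of_isMinimizer (hw : IsMinimizer S Ω 1 (fun _ => 1) w)
    (hu : u ∈ H0 S Ω) (hu_nonneg : 0 ≤ u) :
    ∀ᵐ x ∂m, w x ≤ 0 → u x = 0 := by
  set s := {x | w x ≤ 0}
  have hs : NullMeasurableSet s m :=
    (S.memL2 hw.1.1).aestronglyMeasurable.nullMeasurableSet_le aestronglyMeasurable_const
  have hu_int : Integrable u m := (S.memL2 hu.1).integrable one_le_two
  have hbound : ∀ ε > 0, ∫ x in s, u x ∂m ≤ ε * (normHsq S u / 2) := by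
    intro ε hε
    have hv_int : Integrable (w ⊔ ε • u) m :=
      (S.memL2 (sup_mem_H0 hw.1 (smul_mem_H0 ε hu)).1).integrable one_le_two
    have hw_int : Integrable w m := (S.memL2 hw.1.1).integrable one_le_two
    refine le_of_mul_le_mul_left ?_ hε
    calc ε * ∫ x in s, u x ∂m = ∫ x in s, ε * u x ∂m := (integral_const_mul _ _).symm
      _ ≤ ∫ x in s, ((w ⊔ ε • u) x - w x) ∂m := by
        refine setIntegral_mono_on₀ (hu_int.const_mul ε).integrableOn
          (hv_int.sub hw_int).integrableOn hs fun x hx => ?_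
        have : ε * u x ≤ max (w x) (ε * u x) := le_max_right _ _
        simp only [Pi.sup_apply, Pi.smul_apply, smul_eq_mul]
        linarith [show w x ≤ 0 from hx]
      _ ≤ ∫ x, ((w ⊔ ε • u) x - w x) ∂m :=
        setIntegral_le_integral (hv_int.sub hw_int)
          (ae_of_all _ fun x => sub_nonneg.2 le_sup_left)
      _ ≤ ε ^ 2 * normHsq S u / 2 := integral_sup_smul_sub_le_of_isMinimizer S hw hu ε
      _ = ε * (ε * (normHsq S u / 2)) := by ring
  have hlim : Tendsto (fun ε => ε * (normHsq S u / 2)) (𝓝[>] 0) (𝓝 0) := by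
    simpa using (tendsto_nhdsWithin_of_tendsto_nhds (a := (0 : ℝ)) (s := Set.Ioi 0)
      tendsto_id).mul_const (normHsq S u / 2)
  have hzero : ∫ x in s, u x ∂m = 0 :=
    le_antisymm (ge_of_tendsto hlim (eventually_nhdsWithin_of_forall hbound))
      (integral_nonneg hu_nonneg)
  exact (ae_restrict_iff'₀ hs).1 ((integral_eq_zero_iff_of_nonneg hu_nonneg hu_int.restrict).1 hzero)

lemma H0_subset_H0_pos_of_isMinimizer (hw : IsMinimizer S Ω 1 (fun _ => 1) w) :
    H0 S Ω ⊆ H0 S {x | 0 < w x} := by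
  intro u hu
  have hpos := ae_eq_zero_of_nonpos_of_isMinimizer S hw
    (sup_mem_H0 hu (zero_mem_H0 S Ω)) fun _ => le_sup_right
  have hneg := ae_eq_zero_of_nonpos_of_isMinimizer S hw
    (sup_mem_H0 (smul_mem_H0 (-1) hu) (zero_mem_H0 S Ω)) fun _ => le_sup_right
  refine ⟨hu.1, ?_⟩
  filter_upwards [hpos, hneg] with x hpos hneg hx
  have hx : w x ≤ 0 := not_lt.1 hx
  simp only [Pi.sup_apply, Pi.smul_apply, Pi.zero_apply, smul_eq_mul] at hpos hneg
  linarith [le_max_left (u x) 0, le_max_left (-1 * u x) 0, hpos hx, hneg hx]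

theorem statement_11_general {X : Type*} [MeasurableSpace X] {m : Measure X} [IsFiniteMeasure m]
    (S : Setting X m)
    {Ω : Set X}
    {w : X → ℝ} (hw : IsMinimizer S Ω 1 (fun _ => 1) w) :
    H0 S Ω = H0 S {x | 0 < w x} ∧
    lambda1 S Ω = lambda1 S {x | 0 < w x} ∧
    En S Ω = En S {x | 0 < w x} := by
  have hH0 : H0 S Ω = H0 S {x | 0 < w x} := by
    refine (H0_subset_H0_pos_of_isMinimizer S hw).antisymm (H0_mono_ae S ?_)
    filter_upwards [hw.1.2] with x hw_out hx
    by_contra hxΩ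
    exact (hw_out hxΩ ▸ hx : (0 : ℝ) < 0).false
  exact ⟨hH0, by simp only [lambda1, hH0], by simp only [En, hH0]⟩

/-- `H₀(Ω) = H₀({w_Ω > 0})`, hence `λ₁` and `E` coincide on the two sets. -/
theorem statement_11 {X : Type*} [MeasurableSpace X] {m : Measure X} [IsFiniteMeasure m]
    (S : Setting X m) (hcpt : CompactEmbedding S) (hlsc : GradLSC S)
    {Ω : Set X} (hΩ : MeasurableSet Ω)
    {w : X → ℝ} (hw : IsMinimizer S Ω 1 (fun _ => 1) w) :
    H0 S Ω = H0 S {x | 0 < w x} ∧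
    lambda1 S Ω = lambda1 S {x | 0 < w x} ∧
    En S Ω = En S {x | 0 < w x} :=
  statement_11_general S hw

end AbsSob
end

section
/- Compactness of weak-γ-convergence: every sequence of energy sets admits a subsequence that weak-γ-converges to some energy set, i.e. there is a subsequence with w_{Ω_{n_k}} converging strongly in L²(X,m) to some w ∈ H, with limit set {w > 0}. -/
open MeasureTheory Filter
open scoped ENNReal

namespace AbsSob

variable {X : Type*} [MeasurableSpace X]

variable {m : Measure X}

/-!
The torsion functions `w_n` are bounded in `H` (compare with `0` and use coercivity), so by the
compact embedding a subsequence converges in `L²` to some `w`, which lies in `H` by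
lower semicontinuity. Let `w'` be the torsion function of `{w > 0}`. Each `w_n` satisfies
`F(w_n ⊔ w') ≤ F(w')`, because `F(u ⊔ v) + F(u ⊓ v) = F(u) + F(v)` and
`w_n ⊓ w'` competes with `w_n`. Passing to the limit, `F(w ⊔ w') ≤ F(w')`; since `w ⊔ w'`
competes with `w'` and `F` is strictly convex, `w ⊔ w' = w'`, i.e. `w ≤ w'` a.e.,
so `{w > 0}` is contained in `{w' > 0}` up to a null set.
-/

open Topology

section L2

lemma integral_mul_eq_inner_toLp {f g : X → ℝ} (hf : MemLp f 2 m) (hg : MemLp g 2 m) :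
    ∫ x, f x * g x ∂m = inner ℝ (hf.toLp f) (hg.toLp g) := by
  rw [L2.inner_def]
  refine integral_congr_ae ?_
  filter_upwards [hf.coeFn_toLp, hg.coeFn_toLp] with x hfx hgx
  rw [hfx, hgx, Real.inner_apply]

lemma integral_sq_sub_eq_norm_toLp_sub_sq {f g : X → ℝ} (hf : MemLp f 2 m) (hg : MemLp g 2 m) :
    ∫ x, (f x - g x) ^ 2 ∂m = ‖hf.toLp f - hg.toLp g‖ ^ 2 := by
  rw [← MemLp.toLp_sub, ← real_inner_self_eq_norm_sq,
    ← integral_mul_eq_inner_toLp (hf.sub hg) (hf.sub hg)]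
  simp only [Pi.sub_apply, sq]

variable {u : ℕ → X → ℝ} {g : X → ℝ}

lemma tendsto_toLp_of_tendsto_integral_sq_sub (hu : ∀ k, MemLp (u k) 2 m) (hg : MemLp g 2 m)
    (hconv : Tendsto (fun k => ∫ x, (u k x - g x) ^ 2 ∂m) atTop (𝓝 0)) :
    Tendsto (fun k => (hu k).toLp (u k)) atTop (𝓝 (hg.toLp g)) := by
  rw [tendsto_iff_norm_sub_tendsto_zero]
  simp_rw [integral_sq_sub_eq_norm_toLp_sub_sq (hu _) hg] at hconv
  simpa using hconv.sqrt

lemma tendsto_integral_mul_of_tendsto_integral_sq_sub {v : ℕ → X → ℝ} {h : X → ℝ}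
    (hu : ∀ k, MemLp (u k) 2 m) (hg : MemLp g 2 m) (hv : ∀ k, MemLp (v k) 2 m)
    (hh : MemLp h 2 m)
    (hug : Tendsto (fun k => ∫ x, (u k x - g x) ^ 2 ∂m) atTop (𝓝 0))
    (hvh : Tendsto (fun k => ∫ x, (v k x - h x) ^ 2 ∂m) atTop (𝓝 0)) :
    Tendsto (fun k => ∫ x, u k x * v k x ∂m) atTop (𝓝 (∫ x, g x * h x ∂m)) := by
  simp_rw [integral_mul_eq_inner_toLp (hu _) (hv _), integral_mul_eq_inner_toLp hg hh]
  exact (tendsto_toLp_of_tendsto_integral_sq_sub hu hg hug).inner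
    (tendsto_toLp_of_tendsto_integral_sq_sub hv hh hvh)

lemma ae_mem_of_tendsto_integral_sq_sub {C : X → Set ℝ} (hC : ∀ x, IsClosed (C x))
    (hu : ∀ k, MemLp (u k) 2 m) (hg : MemLp g 2 m)
    (hconv : Tendsto (fun k => ∫ x, (u k x - g x) ^ 2 ∂m) atTop (𝓝 0))
    (huC : ∀ k, ∀ᵐ x ∂m, u k x ∈ C x) : ∀ᵐ x ∂m, g x ∈ C x := by
  obtain ⟨ψ, -, hψ⟩ := (tendstoInMeasure_of_tendsto_Lp
    (tendsto_toLp_of_tendsto_integral_sq_sub hu hg hconv)).exists_seq_tendsto_ae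
  filter_upwards [hψ, ae_all_iff.2 fun k => (hu k).coeFn_toLp, hg.coeFn_toLp, ae_all_iff.2 huC]
    with x hx hux hgx hxC
  simp only [hux, hgx] at hx
  exact (hC x).mem_of_tendsto hx (Eventually.of_forall fun k => hxC _)

lemma tendsto_integral_sq_sub_sup {h : X → ℝ} (hu : ∀ k, MemLp (u k) 2 m) (hg : MemLp g 2 m)
    (hh : MemLp h 2 m) (hconv : Tendsto (fun k => ∫ x, (u k x - g x) ^ 2 ∂m) atTop (𝓝 0)) :
    Tendsto (fun k => ∫ x, ((u k ⊔ h) x - (g ⊔ h) x) ^ 2 ∂m) atTop (𝓝 0) := by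
  refine squeeze_zero (fun k => integral_nonneg fun x => sq_nonneg _) (fun k => ?_) hconv
  refine integral_mono (((hu k).sup hh).sub (hg.sup hh)).integrable_sq
    ((hu k).sub hg).integrable_sq fun x => sq_le_sq.2 ?_
  simpa using abs_max_sub_max_le_abs (u k x) (g x) (h x)

end L2

namespace Setting

variable (S : Setting X m) {u v : X → ℝ}

lemma D_zero : ∀ᵐ x ∂m, S.D 0 x = 0 := by
  simpa using S.D3 0 S.zero_mem

lemma neg_mem (hu : u ∈ S.H) : -u ∈ S.H := by
  simpa using S.smul_mem (-1) hu

lemma D_neg (hu : u ∈ S.H) : ∀ᵐ x ∂m, S.D (-u) x = S.D u x := by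
  simpa using S.D3 (-1) hu

lemma D_inf (hu : u ∈ S.H) (hv : v ∈ S.H) :
    ∀ᵐ x ∂m, S.D (u ⊓ v) x = if u x < v x then S.D u x else S.D v x := by
  have e : u ⊓ v = -(-u ⊔ -v) := by rw [← neg_inf, neg_neg]
  filter_upwards [S.D_neg (S.sup_mem (S.neg_mem hu) (S.neg_mem hv)),
    S.D4 (S.neg_mem hu) (S.neg_mem hv), S.D_neg hu, S.D_neg hv] with x h1 h2 h3 h4
  simp only [e, h1, h2, Pi.neg_apply, neg_lt_neg_iff, h3, h4]

lemma D_eq_of_eq (hu : u ∈ S.H) (hv : v ∈ S.H) :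
    ∀ᵐ x ∂m, u x = v x → S.D u x = S.D v x := by
  filter_upwards [S.D4 hu hv, S.D4 hv hu] with x huv hvu hx
  rw [sup_comm, hvu, hx, if_neg (lt_irrefl _)] at huv
  simpa [hx] using huv

lemma D_sup_sq_add_D_inf_sq (hu : u ∈ S.H) (hv : v ∈ S.H) :
    ∀ᵐ x ∂m, S.D (u ⊔ v) x ^ 2 + S.D (u ⊓ v) x ^ 2 = S.D u x ^ 2 + S.D v x ^ 2 := by
  filter_upwards [S.D4 hu hv, S.D_inf hu hv, S.D_eq_of_eq hu hv] with x h1 h2 h3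
  rw [h1, h2]
  rcases lt_trichotomy (u x) (v x) with h | h | h
  · rw [if_neg h.not_gt, if_pos h, add_comm]
  · rw [if_neg h.not_gt, if_neg h.not_lt, h3 h]
  · rw [if_pos h, if_neg h.not_gt]

lemma normHsq_sup_le (hu : u ∈ S.H) (hv : v ∈ S.H) :
    normHsq S (u ⊔ v) ≤ normHsq S u + normHsq S v := by
  have hD : ∫ x, S.D (u ⊔ v) x ^ 2 ∂m ≤ ∫ x, S.D u x ^ 2 ∂m + ∫ x, S.D v x ^ 2 ∂m := by
    rw [← integral_add (S.gradL2 hu).integrable_sq (S.gradL2 hv).integrable_sq]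
    refine integral_mono_ae (S.gradL2 (S.sup_mem hu hv)).integrable_sq
      ((S.gradL2 hu).integrable_sq.add (S.gradL2 hv).integrable_sq) ?_
    filter_upwards [S.D4 hu hv] with x hx
    rw [hx]
    split_ifs <;> nlinarith [sq_nonneg (S.D u x), sq_nonneg (S.D v x)]
  have hL2 : ∫ x, (u ⊔ v) x ^ 2 ∂m ≤ ∫ x, u x ^ 2 ∂m + ∫ x, v x ^ 2 ∂m := by
    rw [← integral_add (S.memL2 hu).integrable_sq (S.memL2 hv).integrable_sq]
    refine integral_mono (S.memL2 (S.sup_mem hu hv)).integrable_sq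
      ((S.memL2 hu).integrable_sq.add (S.memL2 hv).integrable_sq) fun x => ?_
    rcases le_total (u x) (v x) with h | h <;> simp [h, sq_nonneg]
  unfold normHsq
  linarith

variable {a : ℝ} {f : X → ℝ}

lemma integrable_F_density (hf : MemLp f 2 m) (hu : u ∈ S.H) :
    Integrable (fun x => (1 / 2) * S.D u x ^ 2 + (a / 2) * u x ^ 2 - f x * u x) m :=
  (((S.gradL2 hu).integrable_sq.const_mul _).add ((S.memL2 hu).integrable_sq.const_mul _)).sub
    (hf.integrable_mul (S.memL2 hu))

lemma F_eq_integral (hf : MemLp f 2 m) (hu : u ∈ S.H) :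
    F S a f u = ∫ x, ((1 / 2) * S.D u x ^ 2 + (a / 2) * u x ^ 2 - f x * u x) ∂m := by
  have hD := (S.gradL2 hu).integrable_sq.const_mul (1 / 2)
  have hL2 := (S.memL2 hu).integrable_sq.const_mul (a / 2)
  rw [integral_sub ?_ ?_, integral_add hD hL2, integral_const_mul, integral_const_mul, F]
  · exact hD.add hL2
  · exact hf.integrable_mul (S.memL2 hu)

lemma F_zero : F S a f 0 = 0 := by
  have h : ∫ x, S.D 0 x ^ 2 ∂m = 0 :=
    integral_eq_zero_of_ae (S.D_zero.mono fun x hx => by simp [hx])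
  simp [F, h]

lemma F_sup_add_F_inf (hf : MemLp f 2 m) (hu : u ∈ S.H) (hv : v ∈ S.H) :
    F S a f (u ⊔ v) + F S a f (u ⊓ v) = F S a f u + F S a f v := by
  rw [S.F_eq_integral hf (S.sup_mem hu hv), S.F_eq_integral hf (S.inf_mem hu hv),
    S.F_eq_integral hf hu, S.F_eq_integral hf hv,
    ← integral_add (S.integrable_F_density hf (S.sup_mem hu hv))
      (S.integrable_F_density hf (S.inf_mem hu hv)),
    ← integral_add (S.integrable_F_density hf hu) (S.integrable_F_density hf hv)]
  refine integral_congr_ae ?_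
  filter_upwards [S.D_sup_sq_add_D_inf_sq hu hv] with x hD
  have hL2 : (u ⊔ v) x ^ 2 + (u ⊓ v) x ^ 2 = u x ^ 2 + v x ^ 2 := by
    rcases le_total (u x) (v x) with h | h <;> simp [h, add_comm]
  have hlin : (u ⊔ v) x + (u ⊓ v) x = u x + v x := max_add_min (u x) (v x)
  linear_combination (1 / 2) * hD + (a / 2) * hL2 - f x * hlin

lemma F_midpoint_le (hf : MemLp f 2 m) (hu : u ∈ S.H) (hv : v ∈ S.H) :
    F S a f ((1 / 2 : ℝ) • (u + v)) ≤
      (1 / 2) * F S a f u + (1 / 2) * F S a f v - (a / 8) * ∫ x, (u x - v x) ^ 2 ∂m := by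
  have huv := S.add_mem hu hv
  have hu' := (S.integrable_F_density hf hu (a := a)).const_mul (1 / 2)
  have hv' := (S.integrable_F_density hf hv (a := a)).const_mul (1 / 2)
  have hsq : Integrable (fun x => (a / 8) * (u x - v x) ^ 2) m :=
    ((S.memL2 hu).sub (S.memL2 hv)).integrable_sq.const_mul _
  have hmono : F S a f ((1 / 2 : ℝ) • (u + v)) ≤ ∫ x, ((1 / 2) *
      ((1 / 2) * S.D u x ^ 2 + (a / 2) * u x ^ 2 - f x * u x) + (1 / 2) *
      ((1 / 2) * S.D v x ^ 2 + (a / 2) * v x ^ 2 - f x * v x) - (a / 8) * (u x - v x) ^ 2) ∂m := by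
    rw [S.F_eq_integral hf (S.smul_mem _ huv)]
    refine integral_mono_ae (S.integrable_F_density hf (S.smul_mem _ huv)) ?_ ?_
    · exact (hu'.add hv').sub hsq
    filter_upwards [S.D3 (1 / 2) huv, S.D2 hu hv, S.D1 hu, S.D1 hv, S.D1 huv]
      with x hhalf hsub hDu hDv hDuv
    rw [Pi.smul_apply, smul_eq_mul, hhalf, abs_of_pos one_half_pos]
    simp only [Pi.add_apply]
    nlinarith [sq_nonneg (S.D u x - S.D v x)]
  rw [integral_sub ?_ hsq, integral_add hu' hv', integral_const_mul, integral_const_mul,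
    integral_const_mul, ← S.F_eq_integral hf hu, ← S.F_eq_integral hf hv] at hmono
  · exact hmono
  · exact hu'.add hv'

lemma normHsq_le_F (hf : MemLp f 2 m) (hu : u ∈ S.H) :
    normHsq S u ≤ 4 * F S 1 f u + 4 * ∫ x, f x ^ 2 ∂m := by
  have hlin : ∫ x, f x * u x ∂m ≤ (1 / 4) * ∫ x, u x ^ 2 ∂m + ∫ x, f x ^ 2 ∂m := by
    rw [← integral_const_mul, ← integral_add ((S.memL2 hu).integrable_sq.const_mul _)
      hf.integrable_sq]
    refine integral_mono (hf.integrable_mul (S.memL2 hu))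
      (((S.memL2 hu).integrable_sq.const_mul _).add hf.integrable_sq) fun x => ?_
    nlinarith [sq_nonneg (u x / 2 - f x)]
  have hD : 0 ≤ ∫ x, S.D u x ^ 2 ∂m := integral_nonneg fun x => sq_nonneg _
  unfold normHsq F
  linarith

lemma F_le_of_tendsto (hlsc : GradLSC S) (hf : MemLp f 2 m) {u : ℕ → X → ℝ} {g : X → ℝ}
    (hu : ∀ k, u k ∈ S.H) (hbd : ∃ C, ∀ k, normHsq S (u k) ≤ C)
    (hconv : Tendsto (fun k => ∫ x, (u k x - g x) ^ 2 ∂m) atTop (𝓝 0))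
    {c : ℕ → ℝ} {L : ℝ} (hc : ∀ k, F S a f (u k) ≤ c k) (hcL : Tendsto c atTop (𝓝 L)) :
    g ∈ S.H ∧ F S a f g ≤ L := by
  obtain ⟨hg, hDg⟩ := hlsc u g hu hbd hconv
  have hu2 : ∀ k, MemLp (u k) 2 m := fun k => S.memL2 (hu k)
  have hL2 : Tendsto (fun k => ∫ x, u k x ^ 2 ∂m) atTop (𝓝 (∫ x, g x ^ 2 ∂m)) := by
    simpa only [sq] using tendsto_integral_mul_of_tendsto_integral_sq_sub hu2 (S.memL2 hg)
      hu2 (S.memL2 hg) hconv hconv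
  have hlin : Tendsto (fun k => ∫ x, f x * u k x ∂m) atTop (𝓝 (∫ x, f x * g x ∂m)) :=
    tendsto_integral_mul_of_tendsto_integral_sq_sub (fun _ => hf) hf hu2 (S.memL2 hg)
      (by simp) hconv
  have hr := ((hcL.const_mul 2).sub (hL2.const_mul a)).add (hlin.const_mul 2)
  have hDle : liminf (fun k => ∫ x, S.D (u k) x ^ 2 ∂m) atTop ≤
      2 * L - a * ∫ x, g x ^ 2 ∂m + 2 * ∫ x, f x * g x ∂m := by
    rw [← hr.liminf_eq]
    refine liminf_le_liminf (Eventually.of_forall fun k => ?_)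
      ⟨0, eventually_map.2 (Eventually.of_forall fun k => integral_nonneg fun x => sq_nonneg _)⟩
      hr.isBoundedUnder_le.isCoboundedUnder_ge
    have := hc k
    unfold F at this
    linarith
  refine ⟨hg, ?_⟩
  unfold F
  linarith

end Setting

namespace IsMinimizer

variable {S : Setting X m} {Ω : Set X} {a : ℝ} {f w v : X → ℝ}

lemma F_le_zero (hw : IsMinimizer S Ω a f w) : F S a f w ≤ 0 :=
  S.F_zero (a := a) (f := f) ▸ hw.2 0 ⟨S.zero_mem, by simp⟩

lemma normHsq_le (hf : MemLp f 2 m) (hw : IsMinimizer S Ω 1 f w) :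
    normHsq S w ≤ 4 * ∫ x, f x ^ 2 ∂m := by
  linarith [S.normHsq_le_F hf hw.1.1, hw.F_le_zero]

lemma F_sup_le (hf : MemLp f 2 m) (hw : IsMinimizer S Ω a f w) (hv : v ∈ S.H)
    (hv0 : 0 ≤ᵐ[m] v) : F S a f (w ⊔ v) ≤ F S a f v := by
  have hinf : w ⊓ v ∈ H0 S Ω := by
    refine ⟨S.inf_mem hw.1.1 hv, ?_⟩
    filter_upwards [hw.1.2, hv0] with x hwx hvx hx
    simpa [hwx hx] using hvx
  linarith [hw.2 _ hinf, S.F_sup_add_F_inf hf hw.1.1 hv (a := a)]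

lemma ae_nonneg (ha : 0 < a) (hf : MemLp f 2 m) (hf0 : 0 ≤ᵐ[m] f)
    (hw : IsMinimizer S Ω a f w) : 0 ≤ᵐ[m] w := by
  have h0 : (0 : X → ℝ) ∈ S.H := S.zero_mem
  have hsup : w ⊔ 0 ∈ H0 S Ω := by
    refine ⟨S.sup_mem hw.1.1 h0, ?_⟩
    filter_upwards [hw.1.2] with x hx hxΩ
    simp [hx hxΩ]
  have hinf := S.inf_mem hw.1.1 h0
  -- by the lattice identity, `F (w ⊓ 0) ≤ F 0 = 0`
  have hF : F S a f (w ⊓ 0) ≤ 0 := by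
    linarith [hw.2 _ hsup, S.F_sup_add_F_inf hf hw.1.1 h0 (a := a), S.F_zero (a := a)
      (f := f)]
  have hD : 0 ≤ ∫ x, S.D (w ⊓ 0) x ^ 2 ∂m := integral_nonneg fun x => sq_nonneg _
  have hlin : ∫ x, f x * (w ⊓ 0) x ∂m ≤ 0 :=
    integral_nonpos_of_ae (hf0.mono fun x hx => mul_nonpos_of_nonneg_of_nonpos hx inf_le_right)
  have hL2 : ∫ x, (w ⊓ 0) x ^ 2 ∂m = 0 := by
    refine le_antisymm ?_ (integral_nonneg fun x => sq_nonneg _)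
    unfold F at hF
    nlinarith
  filter_upwards [(integral_eq_zero_iff_of_nonneg (fun x => sq_nonneg _)
    (S.memL2 hinf).integrable_sq).1 hL2] with x hx
  simpa using hx

lemma ae_eq_of_F_le (ha : 0 < a) (hf : MemLp f 2 m) (hw : IsMinimizer S Ω a f w)
    (hv : v ∈ H0 S Ω) (hFv : F S a f v ≤ F S a f w) : v =ᵐ[m] w := by
  have hmid : (1 / 2 : ℝ) • (w + v) ∈ H0 S Ω := by
    refine ⟨S.smul_mem _ (S.add_mem hw.1.1 hv.1), ?_⟩
    filter_upwards [hw.1.2, hv.2] with x hwx hvx hx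
    simp [hwx hx, hvx hx]
  have hsq : ∫ x, (w x - v x) ^ 2 ∂m = 0 := by
    refine le_antisymm ?_ (integral_nonneg fun x => sq_nonneg _)
    nlinarith [hw.2 _ hmid, S.F_midpoint_le hf hw.1.1 hv.1 (a := a)]
  filter_upwards [(integral_eq_zero_iff_of_nonneg (fun x => sq_nonneg _)
    ((S.memL2 hw.1.1).sub (S.memL2 hv.1)).integrable_sq).1 hsq] with x hx
  simpa [sub_eq_zero, eq_comm] using hx

end IsMinimizer

namespace Setting

variable (S : Setting X m) {f : X → ℝ}

lemma exists_isMinimizer (hcpt : CompactEmbedding S) (hlsc : GradLSC S) (hf : MemLp f 2 m)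
    (Ω : Set X) : ∃ w, IsMinimizer S Ω 1 f w := by
  have hne : (F S 1 f '' H0 S Ω).Nonempty := ⟨_, 0, ⟨S.zero_mem, by simp⟩, rfl⟩
  have hbdd : BddBelow (F S 1 f '' H0 S Ω) := by
    refine ⟨-∫ x, f x ^ 2 ∂m, ?_⟩
    rintro _ ⟨u, hu, rfl⟩
    have h0 : 0 ≤ normHsq S u :=
      add_nonneg (integral_nonneg fun x => sq_nonneg _) (integral_nonneg fun x => sq_nonneg _)
    linarith [S.normHsq_le_F hf hu.1]
  obtain ⟨y, hy_anti, hy, hyF⟩ := exists_seq_tendsto_sInf hne hbdd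
  choose u hu hFu using hyF
  have hbd : ∃ C, ∀ k, normHsq S (u k) ≤ C :=
    ⟨4 * y 0 + 4 * ∫ x, f x ^ 2 ∂m, fun k => (S.normHsq_le_F hf (hu k).1).trans
      (by linarith [hFu k, hy_anti (Nat.zero_le k)])⟩
  obtain ⟨ψ, w, hψ, hwH, hconv⟩ := hcpt u (fun k => (hu k).1) hbd
  obtain ⟨-, hFw⟩ := S.F_le_of_tendsto hlsc hf (fun k => (hu (ψ k)).1)
    (hbd.imp fun C hC k => hC (ψ k)) hconv (fun k => (hFu (ψ k)).le) (hy.comp hψ.tendsto_atTop)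
  have hwΩ : ∀ᵐ x ∂m, x ∉ Ω → w x = 0 := by
    refine ae_mem_of_tendsto_integral_sq_sub (C := fun x => {t | x ∉ Ω → t = 0}) (fun x => ?_)
      (fun k => S.memL2 (hu (ψ k)).1) (S.memL2 hwH) hconv fun k => (hu (ψ k)).2
    by_cases hx : x ∈ Ω <;> simp [hx]
  exact ⟨w, ⟨hwH, hwΩ⟩, fun v hv => hFw.trans (csInf_le hbdd ⟨v, hv, rfl⟩)⟩

lemma F_sup_le_of_tendsto (hlsc : GradLSC S) {a : ℝ} (hf : MemLp f 2 m) {Ω : ℕ → Set X}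
    {u : ℕ → X → ℝ} {g v : X → ℝ} (hu : ∀ k, IsMinimizer S (Ω k) a f (u k))
    (hbd : ∃ C, ∀ k, normHsq S (u k) ≤ C)
    (hconv : Tendsto (fun k => ∫ x, (u k x - g x) ^ 2 ∂m) atTop (𝓝 0)) (hg : g ∈ S.H)
    (hv : v ∈ S.H) (hv0 : 0 ≤ᵐ[m] v) : F S a f (g ⊔ v) ≤ F S a f v := by
  obtain ⟨C, hC⟩ := hbd
  exact (S.F_le_of_tendsto hlsc hf (fun k => S.sup_mem (hu k).1.1 hv)
    ⟨C + normHsq S v, fun k => (S.normHsq_sup_le (hu k).1.1 hv).trans (add_le_add (hC k) le_rfl)⟩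
    (tendsto_integral_sq_sub_sup (fun k => S.memL2 (hu k).1.1) (S.memL2 hg) (S.memL2 hv) hconv)
    (fun k => (hu k).F_sup_le hf hv hv0) tendsto_const_nhds).2

end Setting

lemma IsMinimizer.ae_le_of_tendsto {S : Setting X m} {a : ℝ} {f : X → ℝ} {Ω' : Set X}
    {w' : X → ℝ} (hw' : IsMinimizer S Ω' a f w') (hlsc : GradLSC S) (ha : 0 < a)
    (hf : MemLp f 2 m) (hf0 : 0 ≤ᵐ[m] f)
    {Ω : ℕ → Set X} {u : ℕ → X → ℝ} {g : X → ℝ} (hu : ∀ k, IsMinimizer S (Ω k) a f (u k))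
    (hbd : ∃ C, ∀ k, normHsq S (u k) ≤ C)
    (hconv : Tendsto (fun k => ∫ x, (u k x - g x) ^ 2 ∂m) atTop (𝓝 0)) (hg : g ∈ S.H)
    (hgΩ' : ∀ᵐ x ∂m, x ∉ Ω' → g x ≤ 0) : g ≤ᵐ[m] w' := by
  have hw'0 := hw'.ae_nonneg ha hf hf0
  have hsup : g ⊔ w' ∈ H0 S Ω' := by
    refine ⟨S.sup_mem hg hw'.1.1, ?_⟩
    filter_upwards [hw'.1.2, hgΩ'] with x hw'x hgx hx
    simp [hw'x hx, hgx hx]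
  filter_upwards [hw'.ae_eq_of_F_le ha hf hsup
    (S.F_sup_le_of_tendsto hlsc hf hu hbd hconv hg hw'.1.1 hw'0)] with x hx
  exact hx ▸ le_sup_left

theorem statement_14_general {X : Type*} [MeasurableSpace X] {m : Measure X} [IsFiniteMeasure m]
    (S : Setting X m) (hcpt : CompactEmbedding S) (hlsc : GradLSC S)
    (Ω : ℕ → Set X) (wn : ℕ → X → ℝ) (hwn : ∀ n, IsMinimizer S (Ω n) 1 (fun _ => 1) (wn n)) :
    ∃ (φ : ℕ → ℕ) (w : X → ℝ), StrictMono φ ∧ w ∈ S.H ∧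
      Tendsto (fun k => ∫ x, (wn (φ k) x - w x) ^ 2 ∂m) atTop (nhds 0) ∧
      IsEnergySet S {x | 0 < w x} := by
  have hf : MemLp (fun _ : X => (1 : ℝ)) 2 m := memLp_const 1
  have hf0 : 0 ≤ᵐ[m] fun _ : X => (1 : ℝ) := ae_of_all _ fun _ => zero_le_one
  have hbd : ∃ C, ∀ n, normHsq S (wn n) ≤ C := ⟨_, fun n => (hwn n).normHsq_le hf⟩
  obtain ⟨φ, v, hφ, hvH, hconv⟩ := hcpt wn (fun n => (hwn n).1.1) hbd
  -- `v` need not be measurable, while an energy set must be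
  obtain ⟨w, hwm, hvw⟩ := (S.memL2 hvH).aestronglyMeasurable.aemeasurable
  have hconvw : Tendsto (fun k => ∫ x, (wn (φ k) x - w x) ^ 2 ∂m) atTop (𝓝 0) :=
    hconv.congr fun k => integral_congr_ae (hvw.mono fun x hx => by simp only [hx])
  have hbdφ : ∃ C, ∀ k, normHsq S (wn (φ k)) ≤ C := hbd.imp fun C hC k => hC (φ k)
  have hwH : w ∈ S.H := (hlsc _ w (fun k => (hwn (φ k)).1.1) hbdφ hconvw).1
  obtain ⟨w', hw'⟩ := S.exists_isMinimizer hcpt hlsc hf {x | 0 < w x}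
  have hle : w ≤ᵐ[m] w' := hw'.ae_le_of_tendsto hlsc one_pos hf hf0
    (fun k => hwn (φ k)) hbdφ hconvw hwH (ae_of_all _ fun x hx => not_lt.1 hx)
  refine ⟨φ, w, hφ, hwH, hconvw, measurableSet_lt measurable_const hwm, w', hw', ?_⟩
  refine measure_mono_null ?_ (ae_iff.1 hle)
  rintro x ⟨hwx, hw'x⟩ hxle
  exact hw'x (hwx.trans_le hxle)

/-- compactness of the weak-γ-convergence: every sequence of energy
sets has a subsequence whose torsion functions converge strongly in `L²` to some
`w ∈ H`, and the limit set `{w > 0}` is an energy set. -/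
theorem statement_14 {X : Type*} [MeasurableSpace X] {m : Measure X} [IsFiniteMeasure m]
    (S : Setting X m) (hcpt : CompactEmbedding S) (hlsc : GradLSC S)
    (Ω : ℕ → Set X) (hΩ : ∀ n, MeasurableSet (Ω n))
    (wn : ℕ → X → ℝ) (hwn : ∀ n, IsMinimizer S (Ω n) 1 (fun _ => 1) (wn n))
    (hEn : ∀ n, m (Ω n \ {x | 0 < wn n x}) = 0) :
    ∃ (φ : ℕ → ℕ) (w : X → ℝ), StrictMono φ ∧ w ∈ S.H ∧
      Tendsto (fun k => ∫ x, (wn (φ k) x - w x) ^ 2 ∂m) atTop (nhds 0) ∧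
      IsEnergySet S {x | 0 < w x} :=
  statement_14_general S hcpt hlsc Ω wn hwn

end AbsSob
end
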